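/- arXiv:1712.05530 — 5 statements merged into one kernel-verified Lean document; each statement's English description precedes it below -/
import Mathlib

section
/- Let 0 < θ < β < π/2. Let Γ₁ be the contour consisting of the segments from cos(β)e^{iβ} to 0 and from 0 to cos(β)e^{-iβ}. Then the distance from Γ₁ to the set Σ_θ \ Δ_θ is strictly positive, where Σ_θ is the open sector of half-angle θ around the positive real axis and Δ_θ = 1 - B_θ with B_θ the Stolz domain of angle θ. -/
open Complex

def stolzDomain (γ : ℝ) : Set ℂ :=
  interior (convexHull ℝ ({1} ∪ Metric.closedBall (0:ℂ) (Real.sin γ)))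

def reflStolz (γ : ℝ) : Set ℂ := (fun z => 1 - z) '' stolzDomain γ

def sector (θ : ℝ) : Set ℂ := {z : ℂ | z ≠ 0 ∧ |z.arg| < θ}

/-- The contour `Γ₁`: the two segments joining `cos β · e^{iβ}` to `0` and `0` to
`cos β · e^{-iβ}`. -/
def gammaOne (β : ℝ) : Set ℂ :=
  {z : ℂ | ∃ t ∈ Set.Icc (0:ℝ) 1, z = (t:ℂ) * (Real.cos β : ℂ) * Complex.exp (I * β)} ∪
  {z : ℂ | ∃ t ∈ Set.Icc (0:ℝ) 1, z = (t:ℂ) * (Real.cos β : ℂ) * Complex.exp (-(I * β))}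

/-!
Since `Γ₁` is compact, it suffices that it misses the closure of `S = Σ_θ \ Δ_θ`. Away from
the origin `Γ₁` lies on the rays `arg z = ±β`, outside the closed sector `|arg z| ≤ θ`. Near
the origin, every `w = r e^{iφ} ∈ Σ_θ` with `r < cos θ` lies in `Δ_θ`: `1 - w` is a convex
combination of the vertex `1` and the point `1 - cos φ e^{iφ}`, which lies on the circle with
diameter `[0, 1]` at distance `|sin φ| < sin θ` from `0`, hence inside the disc of `B_θ`.
So `S` stays at distance `cos θ` from `0`.
-/

open Set Metric
open scoped Real

theorem exists_pos_le_dist_of_disjoint_closure {α : Type*} [PseudoMetricSpace α] {s t : Set α}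
    (hs : IsCompact s) (hst : Disjoint s (closure t)) :
    ∃ δ > (0:ℝ), ∀ x ∈ s, ∀ y ∈ t, δ ≤ dist x y := by
  obtain ⟨r, hr, h⟩ := Metric.exists_pos_forall_lt_edist hs isClosed_closure hst
  refine ⟨r, hr, fun x hx y hy => ?_⟩
  have := h x hx y (subset_closure hy)
  rw [edist_dist, ENNReal.coe_lt_ofReal] at this
  exact this.le

theorem ball_subset_stolzDomain (γ : ℝ) : ball (0:ℂ) (Real.sin γ) ⊆ stolzDomain γ :=
  interior_maximal ((ball_subset_closedBall.trans subset_union_right).trans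
    (subset_convexHull ℝ _)) isOpen_ball

theorem abs_sin_lt_sin_of_abs_lt {φ θ : ℝ} (hφ : |φ| < θ) (hθ : θ ≤ π / 2) :
    |Real.sin φ| < Real.sin θ := by
  rw [Real.abs_sin_eq_sin_abs_of_abs_le_pi (by linarith [Real.pi_pos])]
  exact Real.sin_lt_sin_of_lt_of_le_pi_div_two (by linarith [abs_nonneg φ, Real.pi_pos]) hθ hφ

theorem norm_one_sub_cos_mul_exp_mul_I (φ : ℝ) :
    ‖1 - (Real.cos φ : ℂ) * Complex.exp (φ * I)‖ = |Real.sin φ| := by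
  have h : 1 - (Real.cos φ : ℂ) * Complex.exp (φ * I) =
      -(Real.sin φ * I * Complex.exp (φ * I)) := by
    rw [Complex.exp_mul_I, ← Complex.ofReal_cos, ← Complex.ofReal_sin]
    linear_combination (-1 : ℂ) * (by exact_mod_cast Real.sin_sq_add_cos_sq φ :
      ((Real.sin φ : ℝ) : ℂ) ^ 2 + ((Real.cos φ : ℝ) : ℂ) ^ 2 = 1) + (Real.sin φ : ℂ) ^ 2 * I_sq
  rw [h, norm_neg, norm_mul, norm_mul, Complex.norm_exp_ofReal_mul_I, Complex.norm_I,
    Complex.norm_real, Real.norm_eq_abs, mul_one, mul_one]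

theorem one_sub_mul_exp_mem_stolzDomain {θ φ r : ℝ} (hφ : |φ| < θ) (hθ : θ ≤ π / 2)
    (hr : 0 < r) (hrφ : r < Real.cos φ) :
    1 - (r : ℂ) * Complex.exp (φ * I) ∈ stolzDomain θ := by
  set s := r / Real.cos φ
  have hcos : 0 < Real.cos φ := hr.trans hrφ
  have hs : 0 < s := div_pos hr hcos
  have hs1 : s < 1 := (div_lt_one hcos).mpr hrφ
  have hu : 1 - (Real.cos φ : ℂ) * Complex.exp (φ * I) ∈ stolzDomain θ := by
    apply ball_subset_stolzDomain
    rw [mem_ball_zero_iff, norm_one_sub_cos_mul_exp_mul_I]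
    exact abs_sin_lt_sin_of_abs_lt hφ hθ
  have hone : (1:ℂ) ∈ convexHull ℝ ({1} ∪ closedBall (0:ℂ) (Real.sin θ)) :=
    subset_convexHull ℝ _ (mem_union_left _ rfl)
  have hsplit : 1 - (r : ℂ) * Complex.exp (φ * I) =
      s • (1 - (Real.cos φ : ℂ) * Complex.exp (φ * I)) + (1 - s) • (1 : ℂ) := by
    have hc : (Real.cos φ : ℂ) ≠ 0 := Complex.ofReal_ne_zero.mpr hcos.ne'
    simp only [Complex.real_smul, s, Complex.ofReal_div, Complex.ofReal_sub, Complex.ofReal_one]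
    field_simp
    ring
  rw [hsplit]
  exact (convex_convexHull ℝ _).combo_interior_self_mem_interior hu hone hs
    (sub_nonneg.mpr hs1.le) (add_sub_cancel s 1)

theorem mem_reflStolz_of_norm_lt_cos {θ : ℝ} {w : ℂ} (hθ : θ ≤ π / 2) (hw : w ∈ sector θ)
    (hw' : ‖w‖ < Real.cos θ) : w ∈ reflStolz θ := by
  obtain ⟨hw0, harg⟩ := hw
  have hcos : Real.cos θ < Real.cos w.arg := by
    rw [← Real.cos_abs w.arg]
    exact Real.cos_lt_cos_of_nonneg_of_le_pi (abs_nonneg _) (by linarith [Real.pi_pos]) harg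
  refine ⟨1 - w, ?_, sub_sub_cancel 1 w⟩
  rw [← Complex.norm_mul_exp_arg_mul_I w]
  exact one_sub_mul_exp_mem_stolzDomain harg hθ (norm_pos_iff.mpr hw0) (hw'.trans hcos)

theorem abs_arg_le_of_mem_closure_sector {θ : ℝ} {z : ℂ} (hz : z ∈ Complex.slitPlane)
    (h : z ∈ closure (sector θ)) : |z.arg| ≤ θ :=
  isClosed_Iic.closure_subset <|
    (Complex.continuousAt_arg hz).abs.continuousWithinAt.mem_closure h fun _ hw => hw.2.le

theorem arg_ofReal_mul_exp_mul_I {r x : ℝ} (hr : 0 < r) (hx : x ∈ Ioc (-π) π) :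
    ((r : ℂ) * Complex.exp (x * I)).arg = x := by
  rw [Complex.arg_real_mul _ hr, Complex.arg_exp_mul_I, toIocMod_eq_self]
  rwa [show -π + 2 * π = π by ring]

theorem isCompact_gammaOne (β : ℝ) : IsCompact (gammaOne β) := by
  have hseg : ∀ c : ℂ, {z : ℂ | ∃ t ∈ Icc (0:ℝ) 1, z = (t:ℂ) * (Real.cos β : ℂ) * c}
      = (fun t : ℝ => (t:ℂ) * (Real.cos β : ℂ) * c) '' Icc 0 1 := fun c => by
    ext z; simp [eq_comm]
  rw [gammaOne, hseg, hseg]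
  exact (isCompact_Icc.image (by fun_prop)).union (isCompact_Icc.image (by fun_prop))

theorem eq_zero_or_abs_arg_eq_of_mem_gammaOne {β : ℝ} {z : ℂ} (hβ : 0 < β) (hβ' : β < π / 2)
    (hz : z ∈ gammaOne β) : z = 0 ∨ |z.arg| = β := by
  have hcos : 0 < Real.cos β := Real.cos_pos_of_mem_Ioo ⟨by linarith, hβ'⟩
  have key : ∀ x, |x| = β → ∀ t ∈ Icc (0:ℝ) 1,
      (t : ℂ) * Real.cos β * Complex.exp (x * I) = 0 ∨
        |((t : ℂ) * Real.cos β * Complex.exp (x * I)).arg| = β := by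
    intro x hx t ht
    rcases ht.1.eq_or_lt with rfl | ht0
    · simp
    right
    have hxπ : x ∈ Ioc (-π) π := by
      constructor <;> linarith [abs_le.mp hx.le, Real.pi_pos]
    rw [← Complex.ofReal_mul, arg_ofReal_mul_exp_mul_I (mul_pos ht0 hcos) hxπ, hx]
  rcases hz with ⟨t, ht, rfl⟩ | ⟨t, ht, rfl⟩
  · simpa only [mul_comm I] using key β (abs_of_pos hβ) t ht
  · simpa only [mul_comm I, ← neg_mul, ← Complex.ofReal_neg] using
      key (-β) (by rw [abs_neg, abs_of_pos hβ]) t ht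

/-- For `0 < θ < β < π/2`, the distance from the contour `Γ₁` (of opening `β`) to the set
`Σ_θ \ Δ_θ` is strictly positive. -/
theorem stmt6 (θ β : ℝ) (h1 : 0 < θ) (h2 : θ < β) (h3 : β < Real.pi / 2) :
    ∃ δ > (0:ℝ), ∀ z ∈ gammaOne β, ∀ w ∈ sector θ \ reflStolz θ, δ ≤ dist z w := by
  refine exists_pos_le_dist_of_disjoint_closure (isCompact_gammaOne β) ?_
  have hnorm : closure (sector θ \ reflStolz θ) ⊆ {w | Real.cos θ ≤ ‖w‖} :=
    (isClosed_le continuous_const continuous_norm).closure_subset_iff.mpr fun w hw =>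
      not_lt.mp fun hlt => hw.2 (mem_reflStolz_of_norm_lt_cos (by linarith) hw.1 hlt)
  refine Set.disjoint_left.mpr fun z hz hcl => ?_
  rcases eq_zero_or_abs_arg_eq_of_mem_gammaOne (h1.trans h2) h3 hz with rfl | harg
  · have hcos : 0 < Real.cos θ := Real.cos_pos_of_mem_Ioo ⟨by linarith, by linarith⟩
    exact hcos.not_ge (by simpa using hnorm hcl)
  · have hslit : z ∈ Complex.slitPlane := Complex.mem_slitPlane_iff_arg.mpr
      ⟨fun h => by rw [h, abs_of_pos Real.pi_pos] at harg; linarith [Real.pi_pos],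
        fun h => by rw [h, Complex.arg_zero, abs_zero] at harg; linarith⟩
    have := abs_arg_le_of_mem_closure_sector hslit (closure_mono sdiff_subset hcl)
    linarith
end

section
/- Let 0 < θ < β < π/2, and let Γ₂ be the counterclockwise circular arc from cos(β)e^{-iβ} to cos(β)e^{iβ} along the circle of center 1 and radius sin β. Then the distance from Γ₂ to the set Δ_θ = 1 - B_θ is strictly positive, where B_θ is the Stolz domain of angle θ. -/
open Complex

/-- The contour `Γ₂`: the counterclockwise circular arc from `cos β · e^{-iβ}` to
`cos β · e^{iβ}` along the circle of centre `1` and radius `sin β`. -/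
def gammaTwo (β : ℝ) : Set ℂ :=
  {z : ℂ | ∃ t ∈ Set.Icc (-(Real.pi / 2 + β)) (Real.pi / 2 + β),
    z = 1 + (Real.sin β : ℂ) * Complex.exp (I * t)}

theorem le_dist_of_inner_add_le {E : Type*} [NormedAddCommGroup E] [InnerProductSpace ℝ E]
    {e p q : E} {δ : ℝ} (he : ‖e‖ = 1) (h : inner ℝ e q + δ ≤ inner ℝ e p) :
    δ ≤ dist p q :=
  calc δ ≤ inner ℝ e (p - q) := by rw [inner_sub_right]; linarith
    _ ≤ ‖e‖ * ‖p - q‖ := real_inner_le_norm e (p - q)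
    _ = dist p q := by rw [he, one_mul, dist_eq_norm]

theorem exists_abs_le_and_abs_sub_le {t a d : ℝ} (ha : 0 ≤ a) (hd : 0 ≤ d) (ht : |t| ≤ a + d) :
    ∃ ψ, |ψ| ≤ a ∧ |t - ψ| ≤ d := by
  refine ⟨max (-a) (min t a), ?_, ?_⟩ <;>
  · rw [abs_le] at ht ⊢
    constructor <;> simp only [max_def, min_def] <;> split_ifs <;> linarith

theorem Real.neg_sin_le_cos_of_abs_le {θ ψ : ℝ} (hθ : θ ≤ Real.pi / 2)
    (hψ : |ψ| ≤ Real.pi / 2 + θ) : -Real.sin θ ≤ Real.cos ψ := by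
  rw [← Real.cos_abs ψ, ← Real.cos_add_pi_div_two, add_comm]
  exact Real.cos_le_cos_of_nonneg_of_le_pi (abs_nonneg ψ) (by linarith) hψ

theorem Complex.inner_exp_ofReal_mul_I (ψ t : ℝ) :
    inner ℝ (exp (ψ * I)) (exp (t * I)) = Real.cos (t - ψ) := by
  rw [Complex.inner, ← exp_conj, ← exp_add, map_mul, conj_ofReal, conj_I, mul_neg,
    ← sub_eq_add_neg, ← sub_mul, ← ofReal_sub, exp_ofReal_mul_I_re]

theorem Complex.neg_le_inner_exp_mul_I_of_mem_convexHull {r ψ : ℝ} (hψ : -r ≤ Real.cos ψ) {u : ℂ}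
    (hu : u ∈ convexHull ℝ ({1} ∪ Metric.closedBall (0 : ℂ) r)) :
    -r ≤ inner ℝ (exp (ψ * I)) u := by
  refine convexHull_min (fun v hv => ?_)
    (convex_halfSpace_ge (innerₛₗ ℝ (exp (ψ * I))).isLinear (-r)) hu
  change -r ≤ inner ℝ (exp (ψ * I)) v
  rcases hv with rfl | hv
  · have h := inner_exp_ofReal_mul_I ψ 0
    rw [ofReal_zero, zero_mul, exp_zero, zero_sub, Real.cos_neg] at h
    rwa [h]
  · rw [mem_closedBall_zero_iff] at hv
    have := real_inner_le_norm (exp (ψ * I)) (-v)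
    rw [inner_neg_right, norm_exp_ofReal_mul_I, norm_neg] at this
    linarith

theorem Real.sin_mul_cos_sub_sub_sin (β θ : ℝ) :
    Real.sin β * Real.cos (β - θ) - Real.sin θ = Real.cos β * Real.sin (β - θ) := by
  rw [Real.cos_sub, Real.sin_sub]
  linear_combination Real.sin θ * Real.sin_sq_add_cos_sq β

/-- For `0 < θ < β < π/2`, the distance from the arc `Γ₂` (on the circle of centre `1`
and radius `sin β`) to the reflected Stolz domain `Δ_θ = 1 - B_θ` is strictly
positive. -/
theorem stmt7 (θ β : ℝ) (h1 : 0 < θ) (h2 : θ < β) (h3 : β < Real.pi / 2) :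
    ∃ δ > (0:ℝ), ∀ z ∈ gammaTwo β, ∀ w ∈ reflStolz θ, δ ≤ dist z w := by
  have hπ := Real.pi_pos
  refine ⟨Real.cos β * Real.sin (β - θ), mul_pos (Real.cos_pos_of_mem_Ioo ⟨by linarith, h3⟩)
    (Real.sin_pos_of_pos_of_lt_pi (by linarith) (by linarith)), ?_⟩
  rintro _ ⟨t, ht, rfl⟩ _ ⟨u, hu, rfl⟩
  obtain ⟨ψ, hψ, htψ⟩ := exists_abs_le_and_abs_sub_le (t := t) (a := Real.pi / 2 + θ)
    (d := β - θ) (by linarith) (by linarith) (by rw [abs_le]; constructor <;> linarith [ht.1, ht.2])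
  have hu' := neg_le_inner_exp_mul_I_of_mem_convexHull
    (Real.neg_sin_le_cos_of_abs_le (by linarith) hψ) (interior_subset hu)
  have hcos : Real.cos (β - θ) ≤ Real.cos (t - ψ) := by
    rw [← Real.cos_abs (t - ψ)]
    exact Real.cos_le_cos_of_nonneg_of_le_pi (abs_nonneg _) (by linarith) htψ
  have hsinβ : 0 ≤ Real.sin β := Real.sin_nonneg_of_nonneg_of_le_pi (by linarith) (by linarith)
  refine le_dist_of_inner_add_le (norm_exp_ofReal_mul_I ψ) ?_
  rw [inner_sub_right, inner_add_right, ← real_smul (x := Real.sin β), real_inner_smul_right,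
    mul_comm I, inner_exp_ofReal_mul_I]
  linarith [mul_le_mul_of_nonneg_left hcos hsinβ, Real.sin_mul_cos_sub_sub_sin β θ]
end

section
/- Let H be a complex Hilbert space and T : H → H a power-bounded operator such that for every x ∈ H and y ∈ H the series Σ_{k≥0} ‖T^k (I-T)^{1/2} x‖² converges with Σ_{k≥0} ‖T^k (I-T)^{1/2} x‖² ≤ C²‖x‖² (square function estimate), and similarly for T*. If x₁ ∈ closure(Ran(I - T)) and y₁ ∈ closure(Ran(I* - T*)), then for all n ≥ 0: Σ_{k≥0} ⟨T^{n+k}(I-T)^{1/2} x₁, (T*)^k (I-T*)^{1/2} y₁⟩ = ⟨(I + T)^{-1} T^n x₁, y₁⟩, provided I + T is invertible on closure(Ran(I-T)). -/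
/-!
Since `S T^k T^{n+k} S = (1 - T) T^{2k} T^n`, the `N`-th partial sum of the series is
`⟪P_N T^n x₁, y₁⟫` with `P_N = (1 - T) ∑_{k<N} T^{2k}`. As `(1 + T) P_N = 1 - T^{2N}` and `P_N` takes
values in `Ran(1 - T)`, where `W` inverts `1 + T`, this partial sum is
`⟪W T^n x₁, y₁⟫ - ⟪W T^{2N+n} x₁, y₁⟫`. Finally `T^m x₁ → 0`: on `Ran(1 - T) = Ran(S²)` this is forced
by the square function estimate, and the equicontinuity of the bounded powers of `T` carries it
over to the closure.
-/

open ContinuousLinearMap Filter Topology Finset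

section Ring

variable {A : Type*} [Ring A]

theorem mul_pow_mul_pow_add_mul {S T : A} (hS : S * S = 1 - T) (hST : Commute S T) (n k : ℕ) :
    S * T ^ k * (T ^ (n + k) * S) = (1 - T) * (T ^ 2) ^ k * T ^ n := by
  calc S * T ^ k * (T ^ (n + k) * S) = S * T ^ (2 * k + n) * S := by
        rw [← mul_assoc, mul_assoc S, ← pow_add, show k + (n + k) = 2 * k + n by omega]
    _ = T ^ (2 * k + n) * (1 - T) := by rw [(hST.pow_right _).eq, mul_assoc, hS]
    _ = (1 - T) * (T ^ 2) ^ k * T ^ n := by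
        rw [← ((Commute.one_left _).sub_left ((Commute.refl T).pow_right _)).eq, pow_add, pow_mul,
          mul_assoc]

theorem one_add_mul_one_sub_mul_geom_sum (T : A) (N : ℕ) :
    (1 + T) * ((1 - T) * ∑ k ∈ range N, (T ^ 2) ^ k) = 1 - (T ^ 2) ^ N := by
  rw [← mul_assoc, show (1 + T) * (1 - T) = 1 - T ^ 2 by noncomm_ring, mul_neg_geom_sum]

end Ring

theorem tendsto_zero_of_summable_norm_sq {E : Type*} [SeminormedAddCommGroup E] {f : ℕ → E}
    (hf : Summable fun k => ‖f k‖ ^ 2) : Tendsto f atTop (𝓝 0) := by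
  rw [tendsto_zero_iff_norm_tendsto_zero]
  simpa [Real.sqrt_sq (norm_nonneg _)] using hf.tendsto_atTop_zero.sqrt

theorem summable_inner_of_summable_norm_sq {𝕜 E ι : Type*} [RCLike 𝕜] [SeminormedAddCommGroup E]
    [InnerProductSpace 𝕜 E] {f g : ι → E} (hf : Summable fun i => ‖f i‖ ^ 2)
    (hg : Summable fun i => ‖g i‖ ^ 2) : Summable fun i => inner 𝕜 (f i) (g i) :=
  .of_norm_bounded ((hf.add hg).div_const 2) fun i =>
    (norm_inner_le_norm (f i) (g i)).trans (by nlinarith [two_mul_le_add_sq ‖f i‖ ‖g i‖])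

section NormedSpace

variable {𝕜 E : Type*} [NontriviallyNormedField 𝕜] [NormedAddCommGroup E] [NormedSpace 𝕜 E]

theorem isClosed_setOf_tendsto_pow_apply_zero {T : E →L[𝕜] E} {C : ℝ}
    (hpow : ∀ n : ℕ, ‖T ^ n‖ ≤ C) :
    IsClosed {x | Tendsto (fun n => (T ^ n) x) atTop (𝓝 0)} := by
  have hequi : Equicontinuous fun n : ℕ => ⇑(T ^ n) :=
    ((NormedSpace.equicontinuous_TFAE fun n : ℕ => T ^ n).out 5 1).mp
      (show ∃ C, ∀ n : ℕ, ‖T ^ n‖ ≤ C from ⟨C, hpow⟩)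
  exact hequi.isClosed_setOfPred_tendsto (f := fun _ => 0) continuous_const

theorem tendsto_pow_apply_zero_of_mem_closure_range {T S : E →L[𝕜] E} {C : ℝ}
    (hpow : ∀ n : ℕ, ‖T ^ n‖ ≤ C) (hS : S * S = 1 - T)
    (hsq : ∀ x : E, Summable fun k : ℕ => ‖(T ^ k * S) x‖ ^ 2) {x : E}
    (hx : x ∈ (LinearMap.range (((1 : E →L[𝕜] E) - T : E →L[𝕜] E) : E →ₗ[𝕜] E)).topologicalClosure) :
    Tendsto (fun n => (T ^ n) x) atTop (𝓝 0) := by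
  refine closure_minimal ?_ (isClosed_setOf_tendsto_pow_apply_zero hpow) hx
  rintro _ ⟨w, rfl⟩
  have hw : ((1 - T : E →L[𝕜] E) : E →ₗ[𝕜] E) w = S (S w) := by
    rw [coe_coe, ← mul_apply_eq_comp, hS]
  simpa only [Set.mem_ofPred_eq, hw, mul_apply_eq_comp] using
    tendsto_zero_of_summable_norm_sq (hsq (S w))

theorem one_sub_mul_geom_sum_apply_eq {T W : E →L[𝕜] E}
    (hW : ∀ x ∈ (LinearMap.range (((1 : E →L[𝕜] E) - T : E →L[𝕜] E) : E →ₗ[𝕜] E)).topologicalClosure,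
      W ((1 + T) x) = x) (N : ℕ) (z : E) :
    ((1 - T) * ∑ k ∈ range N, (T ^ 2) ^ k) z = W z - W (((T ^ 2) ^ N) z) := by
  set P := ∑ k ∈ range N, (T ^ 2) ^ k
  have hmem : ((1 - T) * P) z ∈
      (LinearMap.range (((1 : E →L[𝕜] E) - T : E →L[𝕜] E) : E →ₗ[𝕜] E)).topologicalClosure :=
    Submodule.le_topologicalClosure _ (LinearMap.mem_range_self _ (P z))
  rw [← hW _ hmem, ← mul_apply_eq_comp (1 + T), one_add_mul_one_sub_mul_geom_sum, sub_apply,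
    one_apply_eq_self, map_sub]

end NormedSpace

theorem adjoint_mul_pow {𝕜 H : Type*} [RCLike 𝕜] [NormedAddCommGroup H] [InnerProductSpace 𝕜 H]
    [CompleteSpace H] (S T : H →L[𝕜] H) (k : ℕ) : adjoint (S * T ^ k) = adjoint T ^ k * adjoint S := by
  simp only [← star_eq_adjoint, star_mul, star_pow]

theorem stmt10_general {H : Type*} [NormedAddCommGroup H] [InnerProductSpace ℂ H]
    [CompleteSpace H]
    (T S W : H →L[ℂ] H) (C : ℝ)
    (hpow : ∀ n : ℕ, ‖T ^ n‖ ≤ C)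
    (hS : S * S = 1 - T) (hST : Commute S T)
    (hsq : ∀ x : H, Summable (fun k : ℕ => ‖(T ^ k * S) x‖ ^ 2) ∧
      (∑' k : ℕ, ‖(T ^ k * S) x‖ ^ 2) ≤ C ^ 2 * ‖x‖ ^ 2)
    (hsqStar : ∀ y : H, Summable (fun k : ℕ => ‖((adjoint T) ^ k * adjoint S) y‖ ^ 2) ∧
      (∑' k : ℕ, ‖((adjoint T) ^ k * adjoint S) y‖ ^ 2) ≤ C ^ 2 * ‖y‖ ^ 2)
    (hW1 : ∀ x ∈ (LinearMap.range (((1 : H →L[ℂ] H) - T : H →L[ℂ] H) : H →ₗ[ℂ] H)).topologicalClosure,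
      W ((1 + T) x) = x)
    (x₁ : H) (hx₁ : x₁ ∈ (LinearMap.range (((1 : H →L[ℂ] H) - T : H →L[ℂ] H) : H →ₗ[ℂ] H)).topologicalClosure)
    (y₁ : H) :
    ∀ n : ℕ,
      (∑' k : ℕ, (inner ℂ ((T ^ (n + k) * S) x₁) (((adjoint T) ^ k * adjoint S) y₁) : ℂ))
        = inner ℂ (W ((T ^ n) x₁)) y₁ := by
  intro n
  have hterm : ∀ k : ℕ, inner ℂ ((T ^ (n + k) * S) x₁) (((adjoint T) ^ k * adjoint S) y₁)
      = inner ℂ (((1 - T) * (T ^ 2) ^ k : H →L[ℂ] H) ((T ^ n) x₁)) y₁ := fun k => by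
    rw [← adjoint_mul_pow, adjoint_inner_right, ← mul_apply_eq_comp,
      mul_pow_mul_pow_add_mul hS hST, mul_apply_eq_comp]
  have hsum := summable_inner_of_summable_norm_sq (𝕜 := ℂ)
    ((hsq x₁).1.comp_injective (add_right_injective n)) (hsqStar y₁).1
  have hpartial : ∀ N : ℕ, ∑ k ∈ range N,
      inner ℂ ((T ^ (n + k) * S) x₁) (((adjoint T) ^ k * adjoint S) y₁)
      = inner ℂ (W ((T ^ n) x₁)) y₁ - inner ℂ (W (((T ^ 2) ^ N) ((T ^ n) x₁))) y₁ := fun N => by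
    simp_rw [hterm, ← sum_inner, ← _root_.sum_apply, ← Finset.mul_sum,
      one_sub_mul_geom_sum_apply_eq hW1, inner_sub_left]
  have hdecay : Tendsto (fun N : ℕ => ((T ^ 2) ^ N) ((T ^ n) x₁)) atTop (𝓝 0) := by
    simp_rw [← mul_apply_eq_comp, ← pow_mul, ← pow_add]
    exact (tendsto_pow_apply_zero_of_mem_closure_range hpow hS (fun x => (hsq x).1) hx₁).comp
      (tendsto_atTop_mono (fun N => show N ≤ 2 * N + n by omega) tendsto_id)
  have hlim : Tendsto (fun N : ℕ => inner ℂ (W ((T ^ n) x₁)) y₁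
      - inner ℂ (W (((T ^ 2) ^ N) ((T ^ n) x₁))) y₁) atTop (𝓝 (inner ℂ (W ((T ^ n) x₁)) y₁)) := by
    simpa using tendsto_const_nhds.sub
      (((W.continuous.tendsto' 0 0 (map_zero W)).comp hdecay).inner (𝕜 := ℂ) tendsto_const_nhds)
  exact (hsum.hasSum_iff_tendsto_nat.2 (hlim.congr fun N => (hpartial N).symm)).tsum_eq

/-- The core pairing identity in the loose dilation construction: if `T` is power
bounded on a Hilbert space, `S` is a commuting square root of `I - T` satisfying square
function estimates (and likewise on the adjoint side), and `I + T` is invertible on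
`closure(Ran(I-T))` with inverse `W` there, then for `x₁ ∈ closure(Ran(I-T))`,
`y₁ ∈ closure(Ran(I-T*))` and all `n ≥ 0`,
`Σ_k ⟨T^{n+k}(I-T)^{1/2}x₁, (T*)^k(I-T*)^{1/2}y₁⟩ = ⟨(I+T)^{-1}T^n x₁, y₁⟩`. -/
theorem stmt10 {H : Type*} [NormedAddCommGroup H] [InnerProductSpace ℂ H]
    [CompleteSpace H]
    (T S W : H →L[ℂ] H) (C : ℝ) (hC : 0 < C)
    (hpow : ∀ n : ℕ, ‖T ^ n‖ ≤ C)
    (hS : S * S = 1 - T) (hST : Commute S T)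
    (hsq : ∀ x : H, Summable (fun k : ℕ => ‖(T ^ k * S) x‖ ^ 2) ∧
      (∑' k : ℕ, ‖(T ^ k * S) x‖ ^ 2) ≤ C ^ 2 * ‖x‖ ^ 2)
    (hsqStar : ∀ y : H, Summable (fun k : ℕ => ‖((adjoint T) ^ k * adjoint S) y‖ ^ 2) ∧
      (∑' k : ℕ, ‖((adjoint T) ^ k * adjoint S) y‖ ^ 2) ≤ C ^ 2 * ‖y‖ ^ 2)
    (hWmem : ∀ x ∈ (LinearMap.range (((1 : H →L[ℂ] H) - T : H →L[ℂ] H) : H →ₗ[ℂ] H)).topologicalClosure,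
      W x ∈ (LinearMap.range (((1 : H →L[ℂ] H) - T : H →L[ℂ] H) : H →ₗ[ℂ] H)).topologicalClosure)
    (hW1 : ∀ x ∈ (LinearMap.range (((1 : H →L[ℂ] H) - T : H →L[ℂ] H) : H →ₗ[ℂ] H)).topologicalClosure,
      W ((1 + T) x) = x)
    (hW2 : ∀ x ∈ (LinearMap.range (((1 : H →L[ℂ] H) - T : H →L[ℂ] H) : H →ₗ[ℂ] H)).topologicalClosure,
      (1 + T) (W x) = x)
    (x₁ : H) (hx₁ : x₁ ∈ (LinearMap.range (((1 : H →L[ℂ] H) - T : H →L[ℂ] H) : H →ₗ[ℂ] H)).topologicalClosure)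
    (y₁ : H)
    (hy₁ : y₁ ∈ (LinearMap.range ((((1 : H →L[ℂ] H) - adjoint T : H →L[ℂ] H) : H →ₗ[ℂ] H))).topologicalClosure) :
    ∀ n : ℕ,
      (∑' k : ℕ, (inner ℂ ((T ^ (n + k) * S) x₁) (((adjoint T) ^ k * adjoint S) y₁) : ℂ))
        = inner ℂ (W ((T ^ n) x₁)) y₁ :=
  stmt10_general T S W C hpow hS hST hsq hsqStar hW1 x₁ hx₁ y₁
end

section
/- Let X be a complex Banach space, 1 ≤ p ≤ ∞, and let T₁,…,Tₙ be commuting surjective isometries on X. Then for every polynomial P ∈ ℂ[Z₁,…,Zₙ], ‖P(T₁,…,Tₙ)‖_{X→X} ≤ ‖P(S₁,…,Sₙ) ⊗ I_X‖_{ℓ^p(ℤⁿ, X) → ℓ^p(ℤⁿ, X)}, where S_j is the j-th coordinate left shift on ℓ^p(ℤⁿ, X). -/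
open Function
open scoped ENNReal

private lemma aux_listProd_zpow_add {G : Type*} [Group G] :
    ∀ {m : ℕ} (V : Fin m → G), (∀ i j, Commute (V i) (V j)) →
      ∀ k k' : Fin m → ℤ,
        (List.ofFn fun j => V j ^ (k j + k' j)).prod =
          (List.ofFn fun j => V j ^ k j).prod * (List.ofFn fun j => V j ^ k' j).prod := by
  intro m
  induction m with
  | zero => intro V h k k'; simp
  | succ m ih =>
    intro V h k k'
    rw [List.ofFn_succ, List.ofFn_succ, List.ofFn_succ, List.prod_cons, List.prod_cons,
      List.prod_cons, ih (fun i => V i.succ) (fun i j => h _ _) (fun i => k i.succ)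
        (fun i => k' i.succ), zpow_add]
    have hc : Commute (V 0 ^ k' 0) ((List.ofFn fun j : Fin m => V j.succ ^ k j.succ).prod) := by
      apply Commute.list_prod_right
      intro y hy
      rw [List.mem_ofFn] at hy
      obtain ⟨j, rfl⟩ := hy
      exact (h 0 j.succ).zpow_zpow _ _
    rw [mul_assoc, mul_assoc, ← mul_assoc (V 0 ^ k' 0), hc.eq, mul_assoc]

private lemma aux_pow_apply {X : Type*} [NormedAddCommGroup X] [NormedSpace ℂ X]
    (A : X →L[ℂ] X) (B : X ≃ₗᵢ[ℂ] X) (h : ∀ x, A x = B x) :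
    ∀ (m : ℕ) (x : X), (A ^ m) x = (B ^ m) x := by
  intro m
  induction m with
  | zero => intro x; simp
  | succ m ih =>
    intro x
    rw [pow_succ, pow_succ, ContinuousLinearMap.mul_apply, LinearIsometryEquiv.coe_mul,
      Function.comp_apply, ih, h]

private lemma aux_prod_apply {X : Type*} [NormedAddCommGroup X] [NormedSpace ℂ X] :
    ∀ {m : ℕ} (L : Fin m → (X →L[ℂ] X)) (V : Fin m → (X ≃ₗᵢ[ℂ] X)),
      (∀ i x, L i x = V i x) → ∀ x, (List.ofFn L).prod x = (List.ofFn V).prod x := by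
  intro m
  induction m with
  | zero => intro L V h x; simp
  | succ m ih =>
    intro L V h x
    rw [List.ofFn_succ, List.ofFn_succ, List.prod_cons, List.prod_cons,
      ContinuousLinearMap.mul_apply, LinearIsometryEquiv.coe_mul, Function.comp_apply,
      ih _ _ (fun i x => h i.succ x) x, h 0]

private lemma aux_memℓp_of_finite {ι X : Type*} [NormedAddCommGroup X] {p : ℝ≥0∞}
    (hp : 1 ≤ p) (f : ι → X) (s : Finset ι) (h : ∀ i ∉ s, f i = 0) :
    Memℓp f p := by
  rcases eq_or_ne p ∞ with rfl | hp'
  · apply memℓp_infty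
    apply (((s.finite_toSet.image fun i => ‖f i‖).insert 0).bddAbove).mono
    rintro - ⟨i, rfl⟩
    by_cases hi : i ∈ s
    · exact Set.mem_insert_of_mem _ ⟨i, hi, rfl⟩
    · simp [h i hi]
  · apply memℓp_gen
    apply summable_of_ne_finset_zero (s := s)
    intro i hi
    have hq : p.toReal ≠ 0 :=
      (ENNReal.toReal_pos (one_pos.trans_le hp).ne' hp').ne'
    simp [h i hi, Real.zero_rpow hq]

/-- Evaluation `P(T₁,…,Tₙ)` of a polynomial in `n` commuting variables at a tuple of
bounded operators. -/
noncomputable def polyEval {E : Type*} [NormedAddCommGroup E] [NormedSpace ℂ E]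
    {n : ℕ} (P : MvPolynomial (Fin n) ℂ) (T : Fin n → E →L[ℂ] E) : E →L[ℂ] E :=
  P.support.sum fun e => P.coeff e • (List.ofFn fun j => T j ^ e j).prod

/-- Transference for commuting surjective isometries: if `T₁,…,Tₙ` are commuting
surjective isometries on a Banach space `X` and `S₁,…,Sₙ` are the coordinate shifts on
`ℓ^p(ℤⁿ, X)`, then `‖P(T₁,…,Tₙ)‖ ≤ ‖P(S₁,…,Sₙ)‖` for every polynomial `P`. -/
theorem stmt13 {X : Type*} [NormedAddCommGroup X] [NormedSpace ℂ X] [CompleteSpace X]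
    (p : ℝ≥0∞) [Fact (1 ≤ p)] (n : ℕ)
    (T : Fin n → X →L[ℂ] X)
    (hTiso : ∀ j, Isometry (T j)) (hTsurj : ∀ j, Surjective (T j))
    (hTcomm : ∀ i j, Commute (T i) (T j))
    (S : Fin n → lp (fun _ : Fin n → ℤ => X) p →L[ℂ] lp (fun _ : Fin n → ℤ => X) p)
    (hS : ∀ j, ∀ a : lp (fun _ : Fin n → ℤ => X) p, ∀ k : Fin n → ℤ,
      (S j a) k = a (k - Pi.single j 1))
    (P : MvPolynomial (Fin n) ℂ) :
    ‖polyEval P T‖ ≤ ‖polyEval P S‖ := by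
  classical
  have hp1 : (1 : ℝ≥0∞) ≤ p := Fact.out
  have hp0 : p ≠ 0 := (one_pos.trans_le hp1).ne'
  -- the isometric linear equivalences underlying the `T j`
  have hnorm : ∀ j (x : X), ‖T j x‖ = ‖x‖ := fun j =>
    (AddMonoidHomClass.isometry_iff_norm (T j)).mp (hTiso j)
  set V : Fin n → (X ≃ₗᵢ[ℂ] X) := fun j =>
    LinearIsometryEquiv.ofSurjective ⟨(T j : X →ₗ[ℂ] X), hnorm j⟩ (hTsurj j) with hVdef
  have hVapp : ∀ j x, V j x = T j x := fun j x => rfl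
  have hVcomm : ∀ i j, Commute (V i) (V j) := by
    intro i j
    apply LinearIsometryEquiv.ext
    intro x
    have h := DFunLike.congr_fun (hTcomm i j).eq x
    simp only [ContinuousLinearMap.mul_apply] at h
    show (V i * V j) x = (V j * V i) x
    simpa only [LinearIsometryEquiv.coe_mul, Function.comp_apply, hVapp] using h
  set W : (Fin n → ℤ) → (X ≃ₗᵢ[ℂ] X) := fun k => (List.ofFn fun j => V j ^ k j).prod with hWdef
  have hWadd : ∀ k k', W (k + k') = W k * W k' := fun k k' =>
    aux_listProd_zpow_add V hVcomm k k'
  have hWT : ∀ (e : Fin n →₀ ℕ) (x : X),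
      ((List.ofFn fun j => T j ^ e j).prod) x = W (fun j => ((e j : ℕ) : ℤ)) x := by
    intro e x
    apply aux_prod_apply (fun j => T j ^ e j) (fun j => V j ^ ((e j : ℕ) : ℤ))
    intro i y
    rw [zpow_natCast]
    exact aux_pow_apply (T i) (V i) (hVapp i) (e i) y
  -- shifts
  have hSpow : ∀ (j : Fin n) (m : ℕ) (a : lp (fun _ : Fin n → ℤ => X) p) (k : Fin n → ℤ),
      ((S j ^ m) a) k = a (k - Pi.single j (m : ℤ)) := by
    intro j m
    induction m with
    | zero => intro a k; simp
    | succ m ih =>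
      intro a k
      have hpt : k - Pi.single j ((m : ℤ)) - Pi.single j 1 = k - Pi.single j ((m + 1 : ℕ) : ℤ) := by
        rw [sub_sub, ← Pi.single_add]
        norm_num
      rw [pow_succ, ContinuousLinearMap.mul_apply, ih, hS, hpt]
  have hSprodGen : ∀ (m : ℕ)
      (L : Fin m → (lp (fun _ : Fin n → ℤ => X) p →L[ℂ] lp (fun _ : Fin n → ℤ => X) p))
      (v : Fin m → Fin n → ℤ), (∀ i a k, (L i a) k = a (k - v i)) →
      ∀ a k, ((List.ofFn L).prod a) k = a (k - ∑ i, v i) := by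
    intro m
    induction m with
    | zero => intro L v h a k; simp
    | succ m ih =>
      intro L v h a k
      rw [List.ofFn_succ, List.prod_cons, ContinuousLinearMap.mul_apply, h 0,
        ih _ _ (fun i a k => h i.succ a k), Fin.sum_univ_succ, sub_sub]
  have hSeval : ∀ (e : Fin n →₀ ℕ) (a : lp (fun _ : Fin n → ℤ => X) p) (k : Fin n → ℤ),
      ((List.ofFn fun j => S j ^ e j).prod a) k = a (k - fun j => ((e j : ℕ) : ℤ)) := by
    intro e a k
    have h := hSprodGen n (fun j => S j ^ e j) (fun j => Pi.single j ((e j : ℕ) : ℤ))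
      (fun i a k => hSpow i (e i) a k) a k
    rwa [Finset.univ_sum_single] at h
  have hPT : ∀ y : X,
      polyEval P T y = ∑ e ∈ P.support, P.coeff e • W (fun j => ((e j : ℕ) : ℤ)) y := by
    intro y
    simp only [polyEval, ContinuousLinearMap.sum_apply, ContinuousLinearMap.smul_apply]
    exact Finset.sum_congr rfl fun e _ => by rw [hWT]
  set D : ℕ := P.support.sup (fun e => Finset.univ.sup fun j => e j) with hDdef
  have hD : ∀ e ∈ P.support, ∀ j, e j ≤ D := by
    intro e he j
    refine le_trans ?_ (Finset.le_sup he)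
    exact Finset.le_sup (Finset.mem_univ j)
  refine ContinuousLinearMap.opNorm_le_bound _ (norm_nonneg _) fun x => ?_
  have hcon : ∀ N : ℕ, (D : ℤ) < (N : ℤ) →
      ∃ A : lp (fun _ : Fin n → ℤ => X) p,
        (∀ k : Fin n → ℤ,
          (A : ∀ _ : Fin n → ℤ, X) k =
            if k ∈ Fintype.piFinset (fun _ : Fin n => Finset.Ico (0:ℤ) (N:ℤ)) then W (-k) x
            else 0) ∧
        ∀ k ∈ Fintype.piFinset (fun _ : Fin n => Finset.Ico (D:ℤ) (N:ℤ)),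
          (polyEval P S A : ∀ _ : Fin n → ℤ, X) k = W (-k) (polyEval P T x) := by
    intro N hN
    set B := Fintype.piFinset (fun _ : Fin n => Finset.Ico (0:ℤ) (N:ℤ)) with hBdef
    set a : (Fin n → ℤ) → X := fun k => if k ∈ B then W (-k) x else 0 with hadef
    have ha : Memℓp a p := aux_memℓp_of_finite hp1 a B fun k hk => if_neg hk
    refine ⟨⟨a, ha⟩, fun k => rfl, ?_⟩
    intro k hk
    have hPSapply : (polyEval P S ⟨a, ha⟩ : ∀ _ : Fin n → ℤ, X) k
        = ∑ e ∈ P.support, P.coeff e • a (k - fun j => ((e j : ℕ) : ℤ)) := by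
      have h1 : polyEval P S ⟨a, ha⟩
          = ∑ e ∈ P.support, P.coeff e • ((List.ofFn fun j => S j ^ e j).prod ⟨a, ha⟩) := by
        simp only [polyEval, ContinuousLinearMap.sum_apply, ContinuousLinearMap.smul_apply]
      rw [h1, lp.coeFn_sum, Finset.sum_apply]
      refine Finset.sum_congr rfl fun e _ => ?_
      rw [lp.coeFn_smul, Pi.smul_apply, hSeval]
    rw [hPSapply, hPT, map_sum]
    refine Finset.sum_congr rfl fun e he => ?_
    rw [map_smul]
    congr 1
    have hmem : (k - fun j => ((e j : ℕ) : ℤ)) ∈ B := by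
      rw [hBdef, Fintype.mem_piFinset]
      intro j
      rw [Fintype.mem_piFinset] at hk
      have h1 := hk j
      rw [Finset.mem_Ico] at h1 ⊢
      have h2 : ((e j : ℕ) : ℤ) ≤ (D : ℤ) := by exact_mod_cast hD e he j
      have h3 : (0 : ℤ) ≤ ((e j : ℕ) : ℤ) := Int.natCast_nonneg _
      simp only [Pi.sub_apply]
      omega
    have h5 : a (k - fun j => ((e j : ℕ) : ℤ)) = W (-(k - fun j => ((e j : ℕ) : ℤ))) x := by
      rw [hadef]; exact if_pos hmem
    rw [h5]
    have h4 : -(k - fun j => ((e j : ℕ) : ℤ)) = -k + fun j => ((e j : ℕ) : ℤ) := by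
      rw [neg_sub, sub_eq_neg_add]
    rw [h4, hWadd, LinearIsometryEquiv.coe_mul, Function.comp_apply]
  rcases eq_or_ne p ∞ with rfl | hptop
  · obtain ⟨A, hAcoe, hAkey⟩ := hcon (D + 1) (by push_cast; omega)
    have hk0 : (fun _ : Fin n => (D : ℤ))
        ∈ Fintype.piFinset (fun _ : Fin n => Finset.Ico (D:ℤ) ((D + 1 : ℕ):ℤ)) := by
      rw [Fintype.mem_piFinset]
      intro j
      rw [Finset.mem_Ico]
      push_cast
      omega
    have h1 : ‖polyEval P T x‖
        = ‖(polyEval P S A : ∀ _ : Fin n → ℤ, X) (fun _ => (D:ℤ))‖ := by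
      rw [hAkey _ hk0, LinearIsometryEquiv.norm_map]
    rw [h1]
    have hAle : ‖A‖ ≤ ‖x‖ := by
      refine lp.norm_le_of_forall_le (norm_nonneg x) fun k => ?_
      rw [hAcoe]
      split
      · exact le_of_eq (LinearIsometryEquiv.norm_map _ _)
      · simp
    calc ‖(polyEval P S A : ∀ _ : Fin n → ℤ, X) (fun _ => (D:ℤ))‖
        ≤ ‖polyEval P S A‖ := lp.norm_apply_le_norm ENNReal.top_ne_zero _ _
      _ ≤ ‖polyEval P S‖ * ‖A‖ := (polyEval P S).le_opNorm A
      _ ≤ ‖polyEval P S‖ * ‖x‖ := by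
          exact mul_le_mul_of_nonneg_left hAle (norm_nonneg _)
  · have hq : 0 < p.toReal := ENNReal.toReal_pos hp0 hptop
    have key : ∀ M : ℕ, 1 ≤ M →
        (M : ℝ)^n * ‖polyEval P T x‖ ^ p.toReal
          ≤ ((D + M : ℕ) : ℝ)^n * (‖polyEval P S‖ ^ p.toReal * ‖x‖ ^ p.toReal) := by
      intro M hM
      obtain ⟨A, hAcoe, hAkey⟩ := hcon (D + M) (by push_cast; omega)
      have hcard1 : (Fintype.piFinset fun _ : Fin n => Finset.Ico (0:ℤ) ((D + M : ℕ):ℤ)).card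
          = (D + M)^n := by
        rw [Fintype.card_piFinset, Finset.prod_const, Finset.card_univ, Fintype.card_fin,
          Int.card_Ico]
        try congr 1
        try omega
      have hcard2 : (Fintype.piFinset fun _ : Fin n => Finset.Ico ((D:ℤ)) ((D + M : ℕ):ℤ)).card
          = M^n := by
        rw [Fintype.card_piFinset, Finset.prod_const, Finset.card_univ, Fintype.card_fin,
          Int.card_Ico]
        try congr 1
        try omega
      have hAnorm : ‖A‖ ^ p.toReal = ((D + M : ℕ) : ℝ)^n * ‖x‖ ^ p.toReal := by
        rw [lp.norm_rpow_eq_tsum hq A,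
          tsum_eq_sum (s := Fintype.piFinset (fun _ : Fin n => Finset.Ico (0:ℤ) ((D + M : ℕ):ℤ)))
            (fun k hk => by rw [hAcoe, if_neg hk, norm_zero, Real.zero_rpow hq.ne'])]
        have hc : ∀ k ∈ Fintype.piFinset (fun _ : Fin n => Finset.Ico (0:ℤ) ((D + M : ℕ):ℤ)),
            ‖(A : ∀ _ : Fin n → ℤ, X) k‖ ^ p.toReal = ‖x‖ ^ p.toReal := fun k hk => by
          rw [hAcoe, if_pos hk, LinearIsometryEquiv.norm_map]
        rw [Finset.sum_congr rfl hc, Finset.sum_const, nsmul_eq_mul, hcard1]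
        push_cast
        ring
      have hsum : (M : ℝ)^n * ‖polyEval P T x‖ ^ p.toReal
          = ∑ k ∈ Fintype.piFinset (fun _ : Fin n => Finset.Ico (D:ℤ) ((D + M : ℕ):ℤ)),
              ‖(polyEval P S A : ∀ _ : Fin n → ℤ, X) k‖ ^ p.toReal := by
        have hc : ∀ k ∈ Fintype.piFinset (fun _ : Fin n => Finset.Ico (D:ℤ) ((D + M : ℕ):ℤ)),
            ‖(polyEval P S A : ∀ _ : Fin n → ℤ, X) k‖ ^ p.toReal
              = ‖polyEval P T x‖ ^ p.toReal := fun k hk => by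
          rw [hAkey k hk, LinearIsometryEquiv.norm_map]
        rw [Finset.sum_congr rfl hc, Finset.sum_const, nsmul_eq_mul, hcard2]
        push_cast
        ring
      rw [hsum]
      calc (∑ k ∈ Fintype.piFinset (fun _ : Fin n => Finset.Ico (D:ℤ) ((D + M : ℕ):ℤ)),
              ‖(polyEval P S A : ∀ _ : Fin n → ℤ, X) k‖ ^ p.toReal)
          ≤ ‖polyEval P S A‖ ^ p.toReal := lp.sum_rpow_le_norm_rpow hq _ _
        _ ≤ (‖polyEval P S‖ * ‖A‖) ^ p.toReal :=
            Real.rpow_le_rpow (norm_nonneg _) ((polyEval P S).le_opNorm A) hq.le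
        _ = ‖polyEval P S‖ ^ p.toReal * ‖A‖ ^ p.toReal :=
            Real.mul_rpow (norm_nonneg _) (norm_nonneg _)
        _ = ((D + M : ℕ) : ℝ)^n * (‖polyEval P S‖ ^ p.toReal * ‖x‖ ^ p.toReal) := by
            rw [hAnorm]; ring
    have hLR : ‖polyEval P T x‖ ^ p.toReal
        ≤ ‖polyEval P S‖ ^ p.toReal * ‖x‖ ^ p.toReal := by
      have hRq0 : (0:ℝ) ≤ ‖polyEval P S‖ ^ p.toReal * ‖x‖ ^ p.toReal :=
        mul_nonneg (Real.rpow_nonneg (norm_nonneg _) _) (Real.rpow_nonneg (norm_nonneg _) _)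
      have h1 : Filter.Tendsto (fun M : ℕ => ((D : ℝ) + M) / M) Filter.atTop (nhds 1) := by
        have h2 : Filter.Tendsto (fun M : ℕ => (D : ℝ) / M + 1) Filter.atTop (nhds (0 + 1)) :=
          (tendsto_const_div_atTop_nhds_zero_nat (D : ℝ)).add tendsto_const_nhds
        rw [zero_add] at h2
        refine h2.congr' ?_
        filter_upwards [Filter.eventually_ge_atTop 1] with M hM
        have hM0 : (M : ℝ) ≠ 0 := by positivity
        field_simp
      have htend : Filter.Tendsto
          (fun M : ℕ => (((D : ℝ) + M) / M)^n * (‖polyEval P S‖ ^ p.toReal * ‖x‖ ^ p.toReal))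
          Filter.atTop (nhds (‖polyEval P S‖ ^ p.toReal * ‖x‖ ^ p.toReal)) := by
        have := (h1.pow n).mul_const (‖polyEval P S‖ ^ p.toReal * ‖x‖ ^ p.toReal)
        rwa [one_pow, one_mul] at this
      refine ge_of_tendsto htend ?_
      filter_upwards [Filter.eventually_ge_atTop 1] with M hM
      have hM0 : (0:ℝ) < (M : ℝ) := by positivity
      have hkM := key M hM
      rw [div_pow, div_mul_eq_mul_div, le_div_iff₀ (by positivity)]
      have hcast : ((D + M : ℕ) : ℝ) = (D : ℝ) + M := by push_cast; ring
      rw [hcast] at hkM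
      nlinarith [hkM]
    have h6 : ‖polyEval P T x‖ ^ p.toReal ≤ (‖polyEval P S‖ * ‖x‖) ^ p.toReal := by
      rwa [Real.mul_rpow (norm_nonneg _) (norm_nonneg _)]
    exact (Real.rpow_le_rpow_iff (norm_nonneg _)
      (mul_nonneg (norm_nonneg _) (norm_nonneg _)) hq).mp h6
end

section
/- Let (Ω, μ) be a σ-finite measure space, 1 ≤ p < ∞, X a Banach space, and suppose (T₁,…,Tₙ) is a commuting tuple of bounded operators on X admitting a joint isometric loose dilation: T₁^{i₁}⋯Tₙ^{iₙ} = Q U₁^{i₁}⋯Uₙ^{iₙ} J with U_j commuting surjective isometries on a Banach space W and Q, J bounded. Then for every polynomial P ∈ ℂ[Z₁,…,Zₙ], ‖P(T₁,…,Tₙ)‖ ≤ ‖Q‖‖J‖ · ‖P(S₁,…,Sₙ) ⊗ I_W‖_{ℓ^p(ℤⁿ, W)→ℓ^p(ℤⁿ, W)}. -/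
open Function
open scoped ENNReal

/-!
Since `P(T) = Q P(U) J`, it suffices to show `‖P(U)‖ ≤ ‖P(S)‖` (transference). Given `x ∈ W`,
place `U^m x` at the lattice point `-m` for `m` in the box `[0, N + B)ⁿ`, where `B` bounds the
exponents occurring in `P`. On the inner box `[0, N)ⁿ`, `P(S)` maps this vector to `U^m P(U) x`.
The `U_j` being isometries, comparing `ℓ^p` norms gives
`Nⁿ ‖P(U) x‖^p ≤ ‖P(S)‖^p (N + B)ⁿ ‖x‖^p`, and `N → ∞` yields `‖P(U) x‖ ≤ ‖P(S)‖ ‖x‖`.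
-/

open Filter Topology

theorem List.prod_map_mul_of_commute {ι M : Type*} [Monoid M] {f g : ι → M}
    (h : ∀ i j, Commute (f i) (g j)) (l : List ι) :
    (l.map fun i => f i * g i).prod = (l.map f).prod * (l.map g).prod := by
  induction l with
  | nil => simp
  | cons a l ih =>
    have hcomm : Commute (g a) (l.map f).prod :=
      Commute.list_prod_right _ _ fun y hy => by
        obtain ⟨j, -, rfl⟩ := List.mem_map.mp hy
        exact (h j a).symm
    simp only [List.map_cons, List.prod_cons, ih]
    exact hcomm.mul_mul_mul_comm (f a) (l.map g).prod

theorem le_of_forall_natCast_pow_mul_le {a b : ℝ} (B n : ℕ)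
    (h : ∀ N : ℕ, (N : ℝ) ^ n * a ≤ b * (N + B) ^ n) : a ≤ b := by
  have hlim : Tendsto (fun N : ℕ => b * (1 + B / N) ^ n) atTop (𝓝 b) := by
    simpa using (((tendsto_const_div_atTop_nhds_zero_nat (B : ℝ)).const_add 1).pow n).const_mul b
  refine ge_of_tendsto hlim ?_
  filter_upwards [eventually_gt_atTop 0] with N hN
  have hN : (0 : ℝ) < N := by exact_mod_cast hN
  rw [one_add_div hN.ne', div_pow, mul_div_assoc', le_div_iff₀ (by positivity)]
  linarith [h N]

section MultiPow

variable {M : Type*} [Monoid M] {n : ℕ}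

def multiPow (a : Fin n → M) (e : Fin n → ℕ) : M :=
  (List.ofFn fun j => a j ^ e j).prod

theorem multiPow_add {a : Fin n → M} (ha : ∀ i j, Commute (a i) (a j)) (e f : Fin n → ℕ) :
    multiPow a (e + f) = multiPow a e * multiPow a f := by
  simp only [multiPow, List.ofFn_eq_map, Pi.add_apply, pow_add]
  exact List.prod_map_mul_of_commute (fun i j => (ha i j).pow_pow _ _) _

end MultiPow

section Operators

variable {E : Type*} [NormedAddCommGroup E] [NormedSpace ℂ E] {n : ℕ}

theorem polyEval_apply (P : MvPolynomial (Fin n) ℂ) (T : Fin n → E →L[ℂ] E) (x : E) :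
    polyEval P T x = ∑ e ∈ P.support, P.coeff e • multiPow T e x := by
  simp [polyEval, multiPow]

theorem polyEval_eq_comp_of_dilation {X : Type*} [NormedAddCommGroup X] [NormedSpace ℂ X]
    {T : Fin n → X →L[ℂ] X} {U : Fin n → E →L[ℂ] E} {Q : E →L[ℂ] X} {J : X →L[ℂ] E}
    (hdil : ∀ i, multiPow T i = Q.comp ((multiPow U i).comp J)) (P : MvPolynomial (Fin n) ℂ) :
    polyEval P T = Q.comp ((polyEval P U).comp J) := by
  ext x
  simp [polyEval_apply, hdil]

def isometrySubmonoid : Submonoid (E →L[ℂ] E) where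
  carrier := {A | Isometry A}
  mul_mem' hA hB := hA.comp hB
  one_mem' := isometry_id

theorem norm_multiPow_apply {U : Fin n → E →L[ℂ] E} (hU : ∀ j, Isometry (U j))
    (e : Fin n → ℕ) (x : E) : ‖multiPow U e x‖ = ‖x‖ := by
  have hiso : multiPow U e ∈ (isometrySubmonoid : Submonoid (E →L[ℂ] E)) :=
    Submonoid.list_prod_mem _ fun A hA => by
      obtain ⟨j, rfl⟩ := List.mem_ofFn.mp hA
      exact pow_mem (hU j) _
  exact hiso.norm_map_of_map_zero (map_zero _) x

end Operators

section Shift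

variable {W : Type*} [NormedAddCommGroup W] [NormedSpace ℂ W] {p : ℝ≥0∞} {n : ℕ}

theorem multiPow_apply_of_translate [Fact (1 ≤ p)] {G : Type*} [AddCommGroup G]
    {S : Fin n → lp (fun _ : G => W) p →L[ℂ] lp (fun _ : G => W) p} {v : Fin n → G}
    (hS : ∀ j a k, S j a k = a (k - v j)) (e : Fin n → ℕ) (a : lp (fun _ : G => W) p) (k : G) :
    multiPow S e a k = a (k - ∑ j, e j • v j) := by
  have hpow (j : Fin n) (m : ℕ) (a : lp (fun _ : G => W) p) (k : G) :
      (S j ^ m) a k = a (k - m • v j) := by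
    induction m generalizing k with
    | zero => simp
    | succ m ih => rw [pow_succ', mul_apply_eq_comp, hS, ih, sub_sub, succ_nsmul']
  have hlist (l : List (Fin n)) (a : lp (fun _ : G => W) p) (k : G) :
      (l.map fun j => S j ^ e j).prod a k = a (k - (l.map fun j => e j • v j).sum) := by
    induction l generalizing k with
    | nil => simp
    | cons i l ih =>
      simp only [List.map_cons, List.prod_cons, List.sum_cons, mul_apply_eq_comp]
      rw [hpow, ih, sub_sub]
  rw [multiPow, List.ofFn_eq_map, hlist, ← List.ofFn_eq_map, List.sum_ofFn]

theorem multiPow_shift_apply [Fact (1 ≤ p)]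
    {S : Fin n → lp (fun _ : Fin n → ℤ => W) p →L[ℂ] lp (fun _ : Fin n → ℤ => W) p}
    (hS : ∀ j a k, S j a k = a (k - Pi.single j 1)) (e : Fin n → ℕ)
    (a : lp (fun _ : Fin n → ℤ => W) p) (k : Fin n → ℤ) :
    multiPow S e a k = a (k - fun j => (e j : ℤ)) := by
  have hsum : ∑ j, e j • (Pi.single j 1 : Fin n → ℤ) = fun j => (e j : ℤ) := by
    ext j
    simp [Finset.sum_apply, Pi.single_apply]
  rw [multiPow_apply_of_translate hS, hsum]

def negCast : (Fin n → ℕ) ↪ (Fin n → ℤ) where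
  toFun m := -fun j => (m j : ℤ)
  inj' m m' h := funext fun j => by simpa using congrFun h j

@[simp]
theorem negCast_apply (m : Fin n → ℕ) (j : Fin n) : negCast m j = -(m j : ℤ) := rfl

theorem negCast_sub (m e : Fin n → ℕ) :
    negCast m - (fun j => (e j : ℤ)) = negCast (m + e) := by
  ext j
  simp
  ring

def box (n N : ℕ) : Finset (Fin n → ℕ) :=
  Fintype.piFinset fun _ => Finset.range N

theorem card_box (n N : ℕ) : (box n N).card = N ^ n := by
  simp [box]

theorem add_mem_box {N B : ℕ} {m e : Fin n → ℕ} (hm : m ∈ box n N) (he : ∀ j, e j ≤ B) :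
    m + e ∈ box n (N + B) := by
  simp only [box, Fintype.mem_piFinset, Finset.mem_range, Pi.add_apply] at hm ⊢
  exact fun j => by linarith [hm j, he j]

variable (p) in
noncomputable def orbitVector (U : Fin n → W →L[ℂ] W) (x : W) (N : ℕ) :
    lp (fun _ : Fin n → ℤ => W) p :=
  ∑ m ∈ box n N, lp.single p (negCast m) (multiPow U m x)

theorem orbitVector_apply_negCast (U : Fin n → W →L[ℂ] W) (x : W) {N : ℕ} {m : Fin n → ℕ}
    (hm : m ∈ box n N) : orbitVector p U x N (negCast m) = multiPow U m x := by
  rw [orbitVector, lp.coeFn_sum, Finset.sum_apply]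
  simp [lp.single_apply, Pi.single_apply, negCast.injective.eq_iff, hm]

theorem norm_orbitVector_rpow (hp : 0 < p.toReal) {U : Fin n → W →L[ℂ] W}
    (hU : ∀ j, Isometry (U j)) (x : W) (N : ℕ) :
    ‖orbitVector p U x N‖ ^ p.toReal = N ^ n * ‖x‖ ^ p.toReal := by
  have h := lp.norm_sum_single hp (extend negCast (fun m => multiPow U m x) 0)
    ((box n N).map negCast)
  simp only [Finset.sum_map, negCast.injective.extend_apply] at h
  simp [orbitVector, h, norm_multiPow_apply hU, card_box]

theorem polyEval_shift_orbitVector [Fact (1 ≤ p)]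
    {S : Fin n → lp (fun _ : Fin n → ℤ => W) p →L[ℂ] lp (fun _ : Fin n → ℤ => W) p}
    (hS : ∀ j a k, S j a k = a (k - Pi.single j 1)) {U : Fin n → W →L[ℂ] W}
    (hU : ∀ i j, Commute (U i) (U j)) (P : MvPolynomial (Fin n) ℂ) {B : ℕ}
    (hB : ∀ e ∈ P.support, ∀ j, e j ≤ B) (x : W) {N : ℕ} {m : Fin n → ℕ} (hm : m ∈ box n N) :
    polyEval P S (orbitVector p U x (N + B)) (negCast m) = multiPow U m (polyEval P U x) := by
  rw [polyEval_apply, polyEval_apply, map_sum, lp.coeFn_sum, Finset.sum_apply]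
  refine Finset.sum_congr rfl fun e he => ?_
  rw [lp.coeFn_smul, Pi.smul_apply, multiPow_shift_apply hS, negCast_sub,
    orbitVector_apply_negCast U x (add_mem_box hm (hB e he)), multiPow_add hU,
    mul_apply_eq_comp, map_smul]

end Shift

theorem norm_polyEval_le_of_isometry {W : Type*} [NormedAddCommGroup W] [NormedSpace ℂ W]
    {p : ℝ≥0∞} [Fact (1 ≤ p)] (hp : p ≠ ∞) {n : ℕ} {U : Fin n → W →L[ℂ] W}
    (hUiso : ∀ j, Isometry (U j)) (hUcomm : ∀ i j, Commute (U i) (U j))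
    {S : Fin n → lp (fun _ : Fin n → ℤ => W) p →L[ℂ] lp (fun _ : Fin n → ℤ => W) p}
    (hS : ∀ j a k, S j a k = a (k - Pi.single j 1)) (P : MvPolynomial (Fin n) ℂ) :
    ‖polyEval P U‖ ≤ ‖polyEval P S‖ := by
  set q := p.toReal
  have hq : 0 < q := ENNReal.toReal_pos (zero_lt_one.trans_le Fact.out).ne' hp
  set B := P.totalDegree
  have hB : ∀ e ∈ P.support, ∀ j, e j ≤ B := fun e he j =>
    (Finsupp.le_degree j e).trans (by
      simpa [Finsupp.degree_eq_sum, Finsupp.sum_fintype] using MvPolynomial.le_totalDegree he)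
  refine ContinuousLinearMap.opNorm_le_bound _ (norm_nonneg _) fun x => ?_
  have hbox (N : ℕ) :
      (N : ℝ) ^ n * ‖polyEval P U x‖ ^ q ≤ (‖polyEval P S‖ * ‖x‖) ^ q * (N + B) ^ n := by
    set a := orbitVector p U x (N + B)
    calc (N : ℝ) ^ n * ‖polyEval P U x‖ ^ q
        = ∑ k ∈ (box n N).map negCast, ‖polyEval P S a k‖ ^ q := by
          rw [Finset.sum_map, Finset.sum_congr rfl fun m hm => by
            rw [polyEval_shift_orbitVector hS hUcomm P hB x hm, norm_multiPow_apply hUiso]]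
          simp [card_box]
      _ ≤ ‖polyEval P S a‖ ^ q := lp.sum_rpow_le_norm_rpow hq _ _
      _ ≤ (‖polyEval P S‖ * ‖a‖) ^ q := by gcongr; exact (polyEval P S).le_opNorm a
      _ = (‖polyEval P S‖ * ‖x‖) ^ q * (N + B) ^ n := by
          rw [Real.mul_rpow (norm_nonneg _) (norm_nonneg _), norm_orbitVector_rpow hq hUiso,
            Real.mul_rpow (norm_nonneg _) (norm_nonneg _)]
          push_cast
          ring
  have h := le_of_forall_natCast_pow_mul_le B n fun N => (hbox N).trans_eq (by ring)
  exact (Real.rpow_le_rpow_iff (norm_nonneg _) (by positivity) hq).mp h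

theorem stmt14_general {X W : Type*} [NormedAddCommGroup X] [NormedSpace ℂ X]
    [NormedAddCommGroup W] [NormedSpace ℂ W]
    (p : ℝ≥0∞) [Fact (1 ≤ p)] (hp : p ≠ ∞) (n : ℕ)
    (T : Fin n → X →L[ℂ] X)
    (U : Fin n → W →L[ℂ] W)
    (hUiso : ∀ j, Isometry (U j))
    (hUcomm : ∀ i j, Commute (U i) (U j))
    (Q : W →L[ℂ] X) (J : X →L[ℂ] W)
    (hdil : ∀ i : Fin n → ℕ,
      (List.ofFn fun j => T j ^ i j).prod
        = Q.comp (((List.ofFn fun j => U j ^ i j).prod).comp J))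
    (S : Fin n → lp (fun _ : Fin n → ℤ => W) p →L[ℂ] lp (fun _ : Fin n → ℤ => W) p)
    (hS : ∀ j, ∀ a : lp (fun _ : Fin n → ℤ => W) p, ∀ k : Fin n → ℤ,
      (S j a) k = a (k - Pi.single j 1))
    (P : MvPolynomial (Fin n) ℂ) :
    ‖polyEval P T‖ ≤ ‖Q‖ * ‖J‖ * ‖polyEval P S‖ := by
  rw [polyEval_eq_comp_of_dilation hdil]
  calc ‖Q.comp ((polyEval P U).comp J)‖
      ≤ ‖Q‖ * (‖polyEval P U‖ * ‖J‖) :=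
        (Q.opNorm_comp_le _).trans (by gcongr; exact (polyEval P U).opNorm_comp_le J)
    _ ≤ ‖Q‖ * (‖polyEval P S‖ * ‖J‖) := by
        gcongr
        exact norm_polyEval_le_of_isometry hp hUiso hUcomm hS P
    _ = ‖Q‖ * ‖J‖ * ‖polyEval P S‖ := by ring

/-- A joint isometric loose dilation `T₁^{i₁}⋯Tₙ^{iₙ} = Q U₁^{i₁}⋯Uₙ^{iₙ} J` through
commuting surjective isometries `U_j` of a Banach space `W` yields joint
`p`-polynomial boundedness: `‖P(T)‖ ≤ ‖Q‖‖J‖·‖P(S₁,…,Sₙ)‖`, where `S_j` are the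
coordinate shifts on `ℓ^p(ℤⁿ, W)`. -/
theorem stmt14 {X W : Type*} [NormedAddCommGroup X] [NormedSpace ℂ X] [CompleteSpace X]
    [NormedAddCommGroup W] [NormedSpace ℂ W] [CompleteSpace W]
    (p : ℝ≥0∞) [Fact (1 ≤ p)] (hp : p ≠ ∞) (n : ℕ)
    (T : Fin n → X →L[ℂ] X) (hTcomm : ∀ i j, Commute (T i) (T j))
    (U : Fin n → W →L[ℂ] W)
    (hUiso : ∀ j, Isometry (U j)) (hUsurj : ∀ j, Surjective (U j))
    (hUcomm : ∀ i j, Commute (U i) (U j))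
    (Q : W →L[ℂ] X) (J : X →L[ℂ] W)
    (hdil : ∀ i : Fin n → ℕ,
      (List.ofFn fun j => T j ^ i j).prod
        = Q.comp (((List.ofFn fun j => U j ^ i j).prod).comp J))
    (S : Fin n → lp (fun _ : Fin n → ℤ => W) p →L[ℂ] lp (fun _ : Fin n → ℤ => W) p)
    (hS : ∀ j, ∀ a : lp (fun _ : Fin n → ℤ => W) p, ∀ k : Fin n → ℤ,
      (S j a) k = a (k - Pi.single j 1))
    (P : MvPolynomial (Fin n) ℂ) :
    ‖polyEval P T‖ ≤ ‖Q‖ * ‖J‖ * ‖polyEval P S‖ :=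
  stmt14_general p hp n T U hUiso hUcomm Q J hdil S hS P
end
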